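/- Let τ : ℝ² → ℝ be a bounded measurable symmetric function and ρ : ℝ → ℝ a nonnegative integrable function with compact support. For s ∈ ℝ define ζ_s : ℝ → ℝ by ζ_s(y) := ∫₁^∞ ((r−1)/r²) τ(s, s + r(y−s)) ρ(s + r(y−s)) dr. Then for every s ∈ ℝ and every C² function φ : ℝ → ℂ with bounded second derivative, the functional Ξ_s(φ) := ∫_ℝ τ(s,t) ρ(t) (φ(t) − φ(s) − (t−s)φ'(s))/(t−s)² dt satisfies Ξ_s(φ) = ∫_ℝ φ''(y) ζ_s(y) dy. -/

import Mathlib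

/-!
Taylor's formula with integral remainder writes the difference quotient in `Ξ_s` as
`∫₀¹ (1 - u) φ''(s + u (t - s)) du`. Exchanging the integrals, substituting `y = s + u (t - s)`
for fixed `u` and exchanging back, the inner integral over `u ∈ (0, 1)` becomes `ζ_s(y)` after
the change of variables `r = 1 / u`. Only a.e.-measurability of `τ(s, ·) ρ` is available, so it
is first replaced by a measurable representative, which changes `ζ_s(y)` for no `y ≠ s`.
-/

open MeasureTheory

/-- The functional `Ξ_s(φ) := ∫_ℝ τ(s,t) ρ(t) (φ(t) − φ(s) − (t−s)φ'(s))/(t−s)² dt`. -/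
noncomputable def Xi (τ : ℝ → ℝ → ℝ) (ρ : ℝ → ℝ) (s : ℝ) (φ : ℝ → ℂ) : ℂ :=
  ∫ t : ℝ, ((τ s t * ρ t : ℝ) : ℂ) *
      ((φ t - φ s - ((t : ℂ) - (s : ℂ)) * deriv φ s) / (((t : ℂ) - (s : ℂ)) ^ 2))

/-- `ζ_s(y) := ∫₁^∞ ((r−1)/r²) τ(s, s + r(y−s)) ρ(s + r(y−s)) dr`. -/
noncomputable def zeta (τ : ℝ → ℝ → ℝ) (ρ : ℝ → ℝ) (s : ℝ) (y : ℝ) : ℝ :=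
  ∫ r in Set.Ioi (1 : ℝ), ((r - 1) / r ^ 2) * τ s (s + r * (y - s)) * ρ (s + r * (y - s))

open Set

section
variable {E : Type*} [NormedAddCommGroup E]

theorem taylor_two_integral_remainder [NormedSpace ℝ E] [CompleteSpace E] {f : ℝ → E}
    (hf : ContDiff ℝ 2 f) (x h : ℝ) :
    f (x + h) = f x + h • deriv f x +
      h ^ 2 • ∫ u in (0 : ℝ)..1, (1 - u) • iteratedDeriv 2 f (x + u * h) := by
  have := map_add_eq_sum_add_integral_iteratedFDeriv (n := 1) (x := x) (y := h)
    (fun t _ => hf.contDiffAt)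
  simp only [iteratedFDeriv_apply_eq_iteratedDeriv_mul_prod, Finset.sum_range_succ] at this
  simpa [iteratedDeriv_one, smul_smul, mul_comm, ← intervalIntegral.integral_smul] using this

theorem integral_comp_homothety [NormedSpace ℝ E] (f : ℝ → E) (s c : ℝ) :
    ∫ y, f (s + c * (y - s)) = |c⁻¹| • ∫ t, f t := by
  have h : (fun y => f (s + c * (y - s))) = fun y => (fun x => f (x + (s - c * s))) (c * y) := by
    funext y; ring_nf
  rw [h, Measure.integral_comp_mul_left (fun x => f (x + (s - c * s))),
    integral_add_right_eq_self]

theorem integral_smul_comp_homothety_inv [NormedSpace ℝ E] (f : ℝ → E) (s : ℝ) {u : ℝ}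
    (hu : 0 < u) : ∫ y, u⁻¹ • f (s + u⁻¹ * (y - s)) = ∫ t, f t := by
  rw [integral_smul, integral_comp_homothety, inv_inv, abs_of_pos hu, smul_smul,
    inv_mul_cancel₀ hu.ne', one_smul]

theorem Integrable.comp_homothety {f : ℝ → E} (hf : Integrable f) (s : ℝ) {c : ℝ} (hc : c ≠ 0) :
    Integrable fun y => f (s + c * (y - s)) := by
  have h : (fun y => f (s + c * (y - s))) = fun y => (fun x => f (x + (s - c * s))) (c * y) := by
    funext y; ring_nf
  rw [h]
  exact (hf.comp_add_right _).comp_mul_left' hc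

theorem integral_Ioi_one_eq_integral_Ioo_inv [NormedSpace ℝ E] (g : ℝ → E) :
    ∫ r in Ioi 1, g r = ∫ u in Ioo 0 1, (u ^ 2)⁻¹ • g u⁻¹ := by
  have himage : (fun u : ℝ => u⁻¹) '' Ioo 0 1 = Ioi 1 := by
    rw [image_inv_eq_inv, inv_Ioo_0_left one_pos, inv_one]
  have hderiv : ∀ u ∈ Ioo (0 : ℝ) 1,
      HasDerivWithinAt (fun u : ℝ => u⁻¹) (-(u ^ 2)⁻¹) (Ioo 0 1) u := fun u hu =>
    (hasDerivAt_inv hu.1.ne').hasDerivWithinAt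
  rw [← himage, integral_image_eq_integral_abs_deriv_smul measurableSet_Ioo hderiv
    (fun a _ b _ h => inv_injective h)]
  refine setIntegral_congr_fun measurableSet_Ioo fun u _ => ?_
  simp only [abs_neg, abs_inv, abs_pow, sq_abs]
end

theorem ae_eq_comp_affine {β : Type*} {f g : ℝ → β} (hfg : f =ᵐ[volume] g) (a : ℝ) {c : ℝ}
    (hc : c ≠ 0) : (fun r : ℝ => f (a + r * c)) =ᵐ[volume] fun r => g (a + r * c) := by
  have hmul : Measure.QuasiMeasurePreserving (fun r : ℝ => r * c) volume volume := by
    simpa only [smul_eq_mul, mul_comm c] using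
      Measure.quasiMeasurePreserving_smul (volume : Measure ℝ) hc
  exact ((measurePreserving_add_left (volume : Measure ℝ) a).quasiMeasurePreserving.comp
    hmul).ae_eq_comp hfg

theorem taylorQuotient_eq_setIntegral {φ : ℝ → ℂ} (hφ : ContDiff ℝ 2 φ) {s t : ℝ}
    (hts : t ≠ s) :
    (φ t - φ s - ((t : ℂ) - (s : ℂ)) * deriv φ s) / ((t : ℂ) - (s : ℂ)) ^ 2 =
      ∫ u in Ioo 0 1, ((1 - u : ℝ) : ℂ) * iteratedDeriv 2 φ (s + u * (t - s)) := by
  have hts' : ((t : ℂ) - (s : ℂ)) ≠ 0 := sub_ne_zero.mpr (Complex.ofReal_injective.ne hts)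
  have h := taylor_two_integral_remainder hφ s (t - s)
  rw [add_sub_cancel] at h
  rw [div_eq_iff (pow_ne_zero 2 hts'), h, ← integral_Ioc_eq_integral_Ioo,
    ← intervalIntegral.integral_of_le zero_le_one]
  simp only [Complex.real_smul, Complex.ofReal_sub, Complex.ofReal_pow]
  ring

section Kernels

variable (w : ℝ → ℝ) (s : ℝ) (φ : ℝ → ℂ)

/- The integrand of `∫ w(t) (φ(t) - φ(s) - (t - s) φ'(s)) / (t - s)² dt` after Taylor expansion,
in the variables `(t, u)`, and after the substitution `y = s + u (t - s)`, in `(u, y)`. -/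
noncomputable def taylorIntegrand (t u : ℝ) : ℂ :=
  iteratedDeriv 2 φ (s + u * (t - s)) * ((w t * (1 - u) : ℝ) : ℂ)

noncomputable def rescaledIntegrand (u y : ℝ) : ℂ :=
  iteratedDeriv 2 φ y * (((1 - u) / u * w (s + u⁻¹ * (y - s)) : ℝ) : ℂ)

variable {w s φ}

theorem rescaledIntegrand_eq {u : ℝ} (hu : u ≠ 0) (y : ℝ) :
    rescaledIntegrand w s φ u y = u⁻¹ • taylorIntegrand w s φ (s + u⁻¹ * (y - s)) u := by
  have hy : s + u * (s + u⁻¹ * (y - s) - s) = y := by field_simp; ring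
  simp only [rescaledIntegrand, taylorIntegrand, hy, Complex.real_smul]
  push_cast
  field_simp

theorem integral_mul_taylorQuotient_eq_integral_taylorIntegrand (hφ : ContDiff ℝ 2 φ) :
    ∫ t, (w t : ℂ) * ((φ t - φ s - ((t : ℂ) - (s : ℂ)) * deriv φ s) / ((t : ℂ) - (s : ℂ)) ^ 2) =
      ∫ t, ∫ u in Ioo 0 1, taylorIntegrand w s φ t u := by
  refine integral_congr_ae ?_
  filter_upwards [Measure.ae_ne volume s] with t hts
  rw [taylorQuotient_eq_setIntegral hφ hts, ← integral_const_mul]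
  refine setIntegral_congr_fun measurableSet_Ioo fun u _ => ?_
  simp only [taylorIntegrand]
  push_cast
  ring

theorem integrable_taylorIntegrand (hw : Integrable w) (hφ : ContDiff ℝ 2 φ) {C : ℝ}
    (hφ'' : ∀ y, ‖iteratedDeriv 2 φ y‖ ≤ C) :
    Integrable (Function.uncurry (taylorIntegrand w s φ))
      (volume.prod (volume.restrict (Ioo 0 1))) := by
  have hcont : Continuous (iteratedDeriv 2 φ) := hφ.continuous_iteratedDeriv 2 le_rfl
  have hone : Integrable (fun u : ℝ => 1 - u) (volume.restrict (Ioo 0 1)) :=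
    (continuous_const.sub continuous_id).integrableOn_Icc.mono_set Ioo_subset_Icc_self
  have hφ''_meas : AEStronglyMeasurable (fun p : ℝ × ℝ => iteratedDeriv 2 φ (s + p.2 * (p.1 - s)))
      (volume.prod (volume.restrict (Ioo 0 1))) :=
    (hcont.comp (by fun_prop)).aestronglyMeasurable
  exact (hw.mul_prod hone).ofReal.bdd_mul hφ''_meas (ae_of_all _ fun p => hφ'' _)

theorem integral_rescaledIntegrand {u : ℝ} (hu : 0 < u) :
    ∫ y, rescaledIntegrand w s φ u y = ∫ t, taylorIntegrand w s φ t u := by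
  simp_rw [rescaledIntegrand_eq hu.ne']
  exact integral_smul_comp_homothety_inv (taylorIntegrand w s φ · u) s hu

theorem integral_norm_rescaledIntegrand {u : ℝ} (hu : 0 < u) :
    ∫ y, ‖rescaledIntegrand w s φ u y‖ = ∫ t, ‖taylorIntegrand w s φ t u‖ := by
  simp_rw [rescaledIntegrand_eq hu.ne', norm_smul, norm_inv, Real.norm_of_nonneg hu.le,
    ← smul_eq_mul (a := u⁻¹)]
  exact integral_smul_comp_homothety_inv (‖taylorIntegrand w s φ · u‖) s hu

theorem integrable_rescaledIntegrand (hw_meas : Measurable w) (hw : Integrable w)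
    (hφ : ContDiff ℝ 2 φ) {C : ℝ} (hφ'' : ∀ y, ‖iteratedDeriv 2 φ y‖ ≤ C) :
    Integrable (Function.uncurry (rescaledIntegrand w s φ))
      ((volume.restrict (Ioo 0 1)).prod volume) := by
  have hF := integrable_taylorIntegrand (s := s) hw hφ hφ''
  have hmeas : Measurable (Function.uncurry (rescaledIntegrand w s φ)) := by
    have := (hφ.continuous_iteratedDeriv 2 le_rfl).measurable
    unfold rescaledIntegrand Function.uncurry
    fun_prop
  refine (integrable_prod_iff hmeas.aestronglyMeasurable).2 ⟨?_, ?_⟩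
  · filter_upwards [hF.prod_left_ae, ae_restrict_mem measurableSet_Ioo] with u hu_int hu
    simp_rw [Function.uncurry_apply_pair, rescaledIntegrand_eq hu.1.ne']
    exact (Integrable.comp_homothety hu_int s (inv_ne_zero hu.1.ne')).smul u⁻¹
  · refine hF.integral_norm_prod_right.congr ?_
    filter_upwards [ae_restrict_mem measurableSet_Ioo] with u hu
    exact (integral_norm_rescaledIntegrand hu.1).symm

theorem setIntegral_rescaledIntegrand (y : ℝ) :
    ∫ u in Ioo 0 1, rescaledIntegrand w s φ u y =
      iteratedDeriv 2 φ y * ((∫ r in Ioi 1, (r - 1) / r ^ 2 * w (s + r * (y - s)) : ℝ) : ℂ) := by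
  rw [integral_Ioi_one_eq_integral_Ioo_inv, ← integral_complex_ofReal, ← integral_const_mul]
  refine setIntegral_congr_fun measurableSet_Ioo fun u hu => ?_
  have hu0 : u ≠ 0 := hu.1.ne'
  simp only [rescaledIntegrand, smul_eq_mul]
  congr 2
  field_simp

end Kernels

theorem integral_mul_taylorQuotient_eq_integral_iteratedDeriv_mul {w : ℝ → ℝ} {s : ℝ}
    {φ : ℝ → ℂ} (hw_meas : Measurable w) (hw : Integrable w) (hφ : ContDiff ℝ 2 φ) {C : ℝ}
    (hφ'' : ∀ y, ‖iteratedDeriv 2 φ y‖ ≤ C) :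
    ∫ t, (w t : ℂ) * ((φ t - φ s - ((t : ℂ) - (s : ℂ)) * deriv φ s) / ((t : ℂ) - (s : ℂ)) ^ 2) =
      ∫ y, iteratedDeriv 2 φ y * ((∫ r in Ioi 1, (r - 1) / r ^ 2 * w (s + r * (y - s)) : ℝ) : ℂ) :=
  calc _ = ∫ t, ∫ u in Ioo 0 1, taylorIntegrand w s φ t u :=
      integral_mul_taylorQuotient_eq_integral_taylorIntegrand hφ
    _ = ∫ u in Ioo 0 1, ∫ t, taylorIntegrand w s φ t u :=
      integral_integral_swap (integrable_taylorIntegrand hw hφ hφ'')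
    _ = ∫ u in Ioo 0 1, ∫ y, rescaledIntegrand w s φ u y :=
      setIntegral_congr_fun measurableSet_Ioo fun u hu => (integral_rescaledIntegrand hu.1).symm
    _ = ∫ y, ∫ u in Ioo 0 1, rescaledIntegrand w s φ u y :=
      integral_integral_swap (integrable_rescaledIntegrand hw_meas hw hφ hφ'')
    _ = _ := by simp_rw [setIntegral_rescaledIntegrand]

section Representative

variable {τ : ℝ → ℝ → ℝ} {ρ : ℝ → ℝ} {s : ℝ} {w : ℝ → ℝ}

theorem Xi_eq_integral_of_ae_eq (hw : (fun t => τ s t * ρ t) =ᵐ[volume] w) (φ : ℝ → ℂ) :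
    Xi τ ρ s φ = ∫ t, (w t : ℂ) *
      ((φ t - φ s - ((t : ℂ) - (s : ℂ)) * deriv φ s) / ((t : ℂ) - (s : ℂ)) ^ 2) := by
  refine integral_congr_ae ?_
  filter_upwards [hw] with t ht
  rw [ht]

theorem zeta_eq_setIntegral_of_ae_eq (hw : (fun t => τ s t * ρ t) =ᵐ[volume] w) {y : ℝ}
    (hy : y ≠ s) : zeta τ ρ s y = ∫ r in Ioi 1, (r - 1) / r ^ 2 * w (s + r * (y - s)) := by
  refine integral_congr_ae (ae_restrict_of_ae ?_)
  filter_upwards [ae_eq_comp_affine hw s (sub_ne_zero.mpr hy)] with r hr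
  rw [mul_assoc, hr]

end Representative

theorem Xi_eq_integral_second_deriv_mul_zeta_general
    (τ : ℝ → ℝ → ℝ) (hτ_meas : Measurable (Function.uncurry τ))
    (hτ_bdd : ∃ C, ∀ s t, |τ s t| ≤ C)
    (ρ : ℝ → ℝ) (hρ_int : Integrable ρ)
    (s : ℝ) (φ : ℝ → ℂ) (hφ : ContDiff ℝ 2 φ)
    (hφ'' : ∃ C, ∀ y, ‖iteratedDeriv 2 φ y‖ ≤ C) :
    Xi τ ρ s φ = ∫ y : ℝ, iteratedDeriv 2 φ y * ((zeta τ ρ s y : ℝ) : ℂ) := by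
  obtain ⟨Cτ, hCτ⟩ := hτ_bdd
  obtain ⟨C, hC⟩ := hφ''
  have hw : Integrable fun t => τ s t * ρ t :=
    hρ_int.bdd_mul (hτ_meas.comp measurable_prodMk_left).aestronglyMeasurable
      (ae_of_all _ fun t => (Real.norm_eq_abs _).trans_le (hCτ s t))
  have hw_mk := hw.aestronglyMeasurable.ae_eq_mk
  rw [Xi_eq_integral_of_ae_eq hw_mk, integral_mul_taylorQuotient_eq_integral_iteratedDeriv_mul
    hw.aestronglyMeasurable.stronglyMeasurable_mk.measurable (hw.congr hw_mk) hφ hC]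
  refine integral_congr_ae ?_
  filter_upwards [Measure.ae_ne volume s] with y hy
  rw [zeta_eq_setIntegral_of_ae_eq hw_mk hy]

/-- **Rewriting of the functional Ξ_s (Proposition `propo:rewritingFunctional`).**
For τ bounded measurable symmetric, ρ ≥ 0 integrable with compact support, s ∈ ℝ and any
C² function φ : ℝ → ℂ with bounded second derivative, `Ξ_s(φ) = ∫_ℝ φ''(y) ζ_s(y) dy`. -/
theorem Xi_eq_integral_second_deriv_mul_zeta
    (τ : ℝ → ℝ → ℝ) (hτ_meas : Measurable (Function.uncurry τ))
    (hτ_bdd : ∃ C, ∀ s t, |τ s t| ≤ C) (hτ_symm : ∀ s t, τ s t = τ t s)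
    (ρ : ℝ → ℝ) (hρ_nonneg : ∀ t, 0 ≤ ρ t) (hρ_int : Integrable ρ)
    (hρ_supp : HasCompactSupport ρ)
    (s : ℝ) (φ : ℝ → ℂ) (hφ : ContDiff ℝ 2 φ)
    (hφ'' : ∃ C, ∀ y, ‖iteratedDeriv 2 φ y‖ ≤ C) :
    Xi τ ρ s φ = ∫ y : ℝ, iteratedDeriv 2 φ y * ((zeta τ ρ s y : ℝ) : ℂ) :=
  Xi_eq_integral_second_deriv_mul_zeta_general τ hτ_meas hτ_bdd ρ hρ_int s φ hφ hφ''
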